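/- arXiv:2603.03048 — 4 statements merged into one kernel-verified Lean document; each statement's English description precedes it below -/
import Mathlib

section
/- For the same choice of sign ± throughout, the γ-deformed monopole operators satisfy, for all i, j ∈ {1,…,N} and all α, β ∈ {0,…,ℓ−1}: {u_i^{α±}, u_j^{β±}} = ±(1 − δ_{ij}δ^{αβ}) κ^{αβ} u_i^{α±} u_j^{β±} · C^{αβ}_{ij}, where C^{αβ}_{ij} = 1/(q_i^ℓ − q_j^{ℓ−1}) if (α,β) = (0, ℓ−1), C^{αβ}_{ij} = 1/(q_i^{ℓ−1} − q_j^ℓ) if (α,β) = (ℓ−1, 0), and C^{αβ}_{ij} = 1/(q_i^α − q_j^β) otherwise. -/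
open Real Finset Matrix Kronecker

namespace SpinRS

/-- Phase space: `q`-coordinates and `p`-coordinates indexed by (particle, node). -/
abbrev M (N : ℕ) : Type := ((Fin N × ℕ) → ℝ) × ((Fin N × ℕ) → ℝ)

/-- Extended position coordinate `q_i^α`, satisfying `q_i^{α+ℓ} = q_i^α - γ`. -/
noncomputable def q (N ℓ : ℕ) (γ : ℝ) (i : Fin N) (α : ℤ) (x : M N) : ℝ :=
  x.1 (i, (α % (ℓ : ℤ)).toNat) - γ * ((α / (ℓ : ℤ) : ℤ) : ℝ)

/-- Extended momentum coordinate `p_i^α`, satisfying `p_i^{α+ℓ} = p_i^α`. -/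
def p (N ℓ : ℕ) (i : Fin N) (α : ℤ) (x : M N) : ℝ :=
  x.2 (i, (α % (ℓ : ℤ)).toNat)

/-- Partial derivative with respect to the coordinate `q_i^a`, `0 ≤ a < ℓ`. -/
noncomputable def pdq (N : ℕ) (i : Fin N) (a : ℕ) (f : M N → ℝ) (x : M N) : ℝ :=
  deriv (fun s : ℝ => f (Function.update x.1 (i, a) s, x.2)) (x.1 (i, a))

/-- Partial derivative with respect to the coordinate `p_i^a`, `0 ≤ a < ℓ`. -/
noncomputable def pdp (N : ℕ) (i : Fin N) (a : ℕ) (f : M N → ℝ) (x : M N) : ℝ :=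
  deriv (fun s : ℝ => f (x.1, Function.update x.2 (i, a) s)) (x.2 (i, a))

/-- The Poisson bracket `{f, g}`. -/
noncomputable def Pb (N ℓ : ℕ) (f g : M N → ℝ) (x : M N) : ℝ :=
  ∑ i : Fin N, ∑ a ∈ Finset.range ℓ,
    (pdq N i a f x * pdp N i a g x - pdp N i a f x * pdq N i a g x)

/-- The open set `U` where the extended coordinates are pairwise distinct. -/
def U (N ℓ : ℕ) (γ : ℝ) : Set (M N) :=
  {x | ∀ (i j : Fin N) (α β : ℤ), 0 ≤ α → α ≤ ℓ → 0 ≤ β → β ≤ ℓ →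
    (i, α) ≠ (j, β) → q N ℓ γ i α x ≠ q N ℓ γ j β x}

/-- The gauge polynomial `χ^α(z)`. -/
noncomputable def chi (N ℓ : ℕ) (γ : ℝ) (α : ℤ) (z : ℝ) (x : M N) : ℝ :=
  ∏ i : Fin N, (z - q N ℓ γ i α x)

/-- The γ-deformed monopole operator `u_i^{α,s}` (`s = 1` for `+`, `s = -1` for `-`). -/
noncomputable def u (N ℓ : ℕ) (γ : ℝ) (s : ℤ) (i : Fin N) (α : ℤ) (x : M N) : ℝ :=
  Real.exp ((s : ℝ) * p N ℓ i α x) * chi N ℓ γ (α + s) (q N ℓ γ i α x) x /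
    ∏ j ∈ Finset.univ.erase i, (q N ℓ γ i α x - q N ℓ γ j α x)

/-- Kronecker delta modulo `ℓ`. -/
def dmod (ℓ : ℕ) (α β : ℤ) : ℝ := if α % (ℓ : ℤ) = β % (ℓ : ℤ) then 1 else 0

/-- The Cartan matrix `κ^{αβ}` of the necklace quiver. -/
def kappa (ℓ : ℕ) (α β : ℤ) : ℝ :=
  2 * dmod ℓ α β - dmod ℓ (α + 1) β - dmod ℓ α (β + 1)

/-- One-site `L`-operator `L^{α,s}` as a matrix-valued function. -/
noncomputable def Lmat (N ℓ : ℕ) (γ : ℝ) (s : ℤ) (α : ℤ) (x : M N) :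
    Matrix (Fin N) (Fin N) ℝ :=
  Matrix.of fun i j => u N ℓ γ s j (α + 1) x / (q N ℓ γ j (α + 1) x - q N ℓ γ i α x)

/-- The ordered product `L^{α,s} L^{α+1,s} ⋯ L^{α+n-1,s}`. -/
noncomputable def prodL (N ℓ : ℕ) (γ : ℝ) (s : ℤ) (α : ℤ) (n : ℕ) (x : M N) :
    Matrix (Fin N) (Fin N) ℝ :=
  ((List.range n).map (fun k => Lmat N ℓ γ s (α + (k : ℤ)) x)).prod

/-- The total `L`-operator `L = L^{0,+} L^{1,+} ⋯ L^{ℓ-1,+}`. -/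
noncomputable def Ltot (N ℓ : ℕ) (γ : ℝ) (x : M N) : Matrix (Fin N) (Fin N) ℝ :=
  prodL N ℓ γ 1 0 ℓ x

/-- The Hamiltonians `H[n] = Tr(L^n)`. -/
noncomputable def Ham (N ℓ : ℕ) (γ : ℝ) (n : ℕ) (x : M N) : ℝ :=
  Matrix.trace (Ltot N ℓ γ x ^ n)

/-- The matrix Poisson bracket `{A₁, B₂}` in `End(ℝ^N) ⊗ End(ℝ^N)`. -/
noncomputable def PbMat (N ℓ : ℕ) (A B : M N → Matrix (Fin N) (Fin N) ℝ) (x : M N) :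
    Matrix (Fin N × Fin N) (Fin N × Fin N) ℝ :=
  Matrix.of fun ik jl => Pb N ℓ (fun y => A y ik.1 jl.1) (fun y => B y ik.2 jl.2) x

/-- Matrix unit `e_{ij}`. -/
noncomputable def Eu (N : ℕ) (i j : Fin N) : Matrix (Fin N) (Fin N) ℝ :=
  Matrix.single i j 1

/-- The matrix `r^α`. -/
noncomputable def rmat (N ℓ : ℕ) (γ : ℝ) (α : ℤ) (x : M N) :
    Matrix (Fin N × Fin N) (Fin N × Fin N) ℝ :=
  ∑ i : Fin N, ∑ j ∈ Finset.univ.erase i,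
    (1 / (q N ℓ γ i α x - q N ℓ γ j α x)) •
      ((Eu N i i - Eu N i j) ⊗ₖ (Eu N j j - Eu N j i))

/-- The matrix `r̄^α`. -/
noncomputable def rbar (N ℓ : ℕ) (γ : ℝ) (α : ℤ) (x : M N) :
    Matrix (Fin N × Fin N) (Fin N × Fin N) ℝ :=
  ∑ i : Fin N, ∑ j ∈ Finset.univ.erase i,
    (1 / (q N ℓ γ i α x - q N ℓ γ j α x)) • ((Eu N i i - Eu N i j) ⊗ₖ Eu N j j)

/-- The matrix `r̲^α`. -/
noncomputable def runder (N ℓ : ℕ) (γ : ℝ) (α : ℤ) (x : M N) :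
    Matrix (Fin N × Fin N) (Fin N × Fin N) ℝ :=
  ∑ i : Fin N, ∑ j ∈ Finset.univ.erase i,
    (1 / (q N ℓ γ i α x - q N ℓ γ j α x)) •
      (Eu N i j ⊗ₖ Eu N j i - Eu N i i ⊗ₖ Eu N j j)

/-- Swap of the two tensor factors of `End(ℝ^N) ⊗ End(ℝ^N)`. -/
def swapT (N : ℕ) (R : Matrix (Fin N × Fin N) (Fin N × Fin N) ℝ) :
    Matrix (Fin N × Fin N) (Fin N × Fin N) ℝ :=
  Matrix.of fun ik jl => R (ik.2, ik.1) (jl.2, jl.1)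

/-- The zero mode `E^α = Σ_i u_i^{α,+}`. -/
noncomputable def Egen (N ℓ : ℕ) (γ : ℝ) (α : ℤ) (x : M N) : ℝ :=
  ∑ i : Fin N, u N ℓ γ 1 i α x

/-- The zero mode `F^α = Σ_i u_i^{α,-}`. -/
noncomputable def Fgen (N ℓ : ℕ) (γ : ℝ) (α : ℤ) (x : M N) : ℝ :=
  ∑ i : Fin N, u N ℓ γ (-1) i α x

/-- The Cartan zero mode `H^α = Σ_i (2q_i^α - q_i^{α+1} - q_i^{α-1})`. -/
noncomputable def Hcar (N ℓ : ℕ) (γ : ℝ) (α : ℤ) (x : M N) : ℝ :=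
  ∑ i : Fin N, (2 * q N ℓ γ i α x - q N ℓ γ i (α + 1) x - q N ℓ γ i (α - 1) x)

/-- Generating series `e^α(z)`. -/
noncomputable def egens (N ℓ : ℕ) (γ : ℝ) (α : ℤ) (z : ℝ) (x : M N) : ℝ :=
  ∑ i : Fin N, u N ℓ γ 1 i α x / (z - q N ℓ γ i α x)

/-- Generating series `f^α(z)`. -/
noncomputable def fgens (N ℓ : ℕ) (γ : ℝ) (α : ℤ) (z : ℝ) (x : M N) : ℝ :=
  ∑ i : Fin N, u N ℓ γ (-1) i α x / (z - q N ℓ γ i α x)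

/-- Generating series `h^α(z) = χ^{α+1}(z) χ^{α-1}(z) / χ^α(z)²`. -/
noncomputable def hgens (N ℓ : ℕ) (γ : ℝ) (α : ℤ) (z : ℝ) (x : M N) : ℝ :=
  chi N ℓ γ (α + 1) z x * chi N ℓ γ (α - 1) z x / (chi N ℓ γ α z x) ^ 2

/-- `V^s_{α,β} = u^{α,s} L^{α,s} ⋯ L^{β-1,s} e`. -/
noncomputable def Vgen (N ℓ : ℕ) (γ : ℝ) (s : ℤ) (α β : ℤ) (x : M N) : ℝ :=
  ∑ i : Fin N, ∑ j : Fin N, u N ℓ γ s i α x * prodL N ℓ γ s α (β - α).toNat x i j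

/-- The loop algebra generators `J^{αβ}[n]`, for `α, β ∈ {1,…,ℓ}`, `n : ℤ`. -/
noncomputable def Jgen (N ℓ : ℕ) (γ : ℝ) (α β : ℤ) (n : ℤ) (x : M N) : ℝ :=
  if 0 < n then Vgen N ℓ γ 1 α (β + n * ℓ - 1) x
  else if n < 0 then Vgen N ℓ γ (-1) β (α + (-n) * ℓ - 1) x
  else if β < α then Vgen N ℓ γ (-1) β (α - 1) x
  else if α < β then Vgen N ℓ γ 1 α (β - 1) x
  else ∑ i : Fin N, (q N ℓ γ i α x - q N ℓ γ i (α - 1) x)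

/-- The spin variables `a_i^α = (L^{0,+} ⋯ L^{α-2,+} e)_i`, `α ∈ {1,…,ℓ}`. -/
noncomputable def aspin (N ℓ : ℕ) (γ : ℝ) (α : ℤ) (x : M N) (i : Fin N) : ℝ :=
  ∑ j : Fin N, prodL N ℓ γ 1 0 (α - 1).toNat x i j

/-- The spin variables `c_j^α = (u^{α,+} L^{α,+} ⋯ L^{ℓ-1,+})_j`, `α ∈ {1,…,ℓ}`. -/
noncomputable def cspin (N ℓ : ℕ) (γ : ℝ) (α : ℤ) (x : M N) (j : Fin N) : ℝ :=
  ∑ i : Fin N, u N ℓ γ 1 i α x * prodL N ℓ γ 1 α ((ℓ : ℤ) - α).toNat x i j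


/-!
Along the coordinate `q_j^β`, the monopole `u_i^{α,s}` is a constant multiple of a ratio of
products of the differences `q_i^α - q_m^{α+s}` and `q_i^α - q_m^α`, and it depends on the momenta
only through `exp (s p_i^α)`. Hence
`{u_i^α, u_j^β} = s u_i^α u_j^β (∂_{q_j^β} log u_i^α - ∂_{q_i^α} log u_j^β)`, and each logarithmic
derivative has at most two terms: `1 / (q_i^α - q_j^α)` when `β = α`, and
`-1 / (q_i^α - q_j^{α+s})` when `β ≡ α + s (mod ℓ)`. Since `q^{α+ℓ} = q^α - γ`, a difference of
coordinates only depends on its indices modulo `ℓ` up to a common shift; this turns the neighbours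
across the wrap-around `ℓ - 1 ↔ 0` into the special denominators of `C^{αβ}_{ij}`. As `ℓ ≥ 3`, the
neighbours `α + 1` and `α - 1` are distinct, and the coefficients assemble to `κ^{αβ}`.
-/

theorem _root_.Int.modEq_iff_eq_of_lt {n a b : ℤ} (ha : 0 ≤ a) (ha' : a < n) (hb : 0 ≤ b)
    (hb' : b < n) : a ≡ b [ZMOD n] ↔ a = b := by
  rw [Int.ModEq, Int.emod_eq_of_lt ha ha', Int.emod_eq_of_lt hb hb']

theorem _root_.Int.toNat_emod_eq_toNat_iff {n a b : ℤ} (hb : 0 ≤ b) (hb' : b < n) :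
    (a % n).toNat = b.toNat ↔ a ≡ b [ZMOD n] := by
  have h : 0 ≤ a % n := Int.emod_nonneg _ (by omega)
  rw [Int.ModEq, Int.emod_eq_of_lt hb hb']
  omega

theorem _root_.Int.ModEq.eq_sub_or_eq_or_eq_add {n a b : ℤ} (h : a ≡ b [ZMOD n])
    (hab : |b - a| ≤ n) : b = a - n ∨ b = a ∨ b = a + n := by
  obtain ⟨c, hc⟩ := h.dvd
  obtain ⟨h₁, h₂⟩ := abs_le.1 hab
  rcases (abs_nonneg _).trans hab |>.eq_or_lt with hn | hn
  · subst hn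
    omega
  · have : c ≤ 1 := by nlinarith
    have : -1 ≤ c := by nlinarith
    interval_cases c <;> omega

theorem _root_.Int.add_neg_one_modEq_iff {n a b : ℤ} :
    a + -1 ≡ b [ZMOD n] ↔ b + 1 ≡ a [ZMOD n] := by
  rw [Int.modEq_iff_dvd, Int.modEq_iff_dvd, ← dvd_neg]
  ring_nf

theorem _root_.Int.not_add_modEq_self {n a s : ℤ} (hn : 2 ≤ n) (hs : s = 1 ∨ s = -1) :
    ¬a + s ≡ a [ZMOD n] := by
  rw [Int.modEq_iff_dvd, show a - (a + s) = -s by ring, dvd_neg]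
  intro h
  have h₁ : n ∣ 1 := by rcases hs with rfl | rfl <;> simpa using h
  have := Int.le_of_dvd one_pos h₁
  omega

section LogDeriv

variable {𝕜 : Type*} [NontriviallyNormedField 𝕜] {f : 𝕜 → 𝕜} {f' t : 𝕜}

theorem _root_.deriv_eq_mul_logDeriv (hf : f t ≠ 0) : deriv f t = f t * logDeriv f t := by
  rw [logDeriv_apply, mul_div_cancel₀ _ hf]

theorem _root_.HasDerivAt.logDeriv_eq (hf : HasDerivAt f f' t) : logDeriv f t = f' / f t := by
  rw [logDeriv_apply, hf.deriv]

theorem _root_.logDeriv_prod_eq_sum_div {ι : Type*} {s : Finset ι} {g : ι → 𝕜 → 𝕜} {g' : ι → 𝕜}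
    (hg : ∀ i ∈ s, HasDerivAt (g i) (g' i) t) (h₀ : ∀ i ∈ s, g i t ≠ 0) :
    logDeriv (∏ i ∈ s, g i ·) t = ∑ i ∈ s, g' i / g i t := by
  rw [logDeriv_prod h₀ fun i hi => (hg i hi).differentiableAt]
  exact sum_congr rfl fun i hi => (hg i hi).logDeriv_eq

end LogDeriv

section

variable {N ℓ : ℕ} {γ : ℝ}

theorem q_add_mul (hℓ : ℓ ≠ 0) (i : Fin N) (α n : ℤ) (x : M N) :
    q N ℓ γ i (α + n * ℓ) x = q N ℓ γ i α x - n * γ := by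
  have hℓ' : (ℓ : ℤ) ≠ 0 := by exact_mod_cast hℓ
  simp only [q, Int.add_mul_emod_self_right, Int.add_mul_ediv_right _ _ hℓ']
  push_cast
  ring

theorem q_sub_q_of_modEq (hℓ : ℓ ≠ 0) (i j : Fin N) {α β α' β' : ℤ}
    (h : α ≡ α' [ZMOD ℓ]) (hd : β' - α' = β - α) (x : M N) :
    q N ℓ γ i α' x - q N ℓ γ j β' x = q N ℓ γ i α x - q N ℓ γ j β x := by
  obtain ⟨n, hn⟩ := h.dvd
  rw [show α' = α + n * ℓ by linarith, show β' = β + n * ℓ by linarith,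
    q_add_mul hℓ, q_add_mul hℓ]
  ring

theorem q_ne_q_of_mem_U {x : M N} (hx : x ∈ U N ℓ γ) {i j : Fin N} {α β : ℤ}
    (hα : 0 ≤ α) (hα' : α < ℓ) (hβ : α - 1 ≤ β) (hβ' : β ≤ α + 1) (hne : (i, α) ≠ (j, β)) :
    q N ℓ γ i α x ≠ q N ℓ γ j β x := by
  rcases le_or_gt 0 β with hβ₀ | hβ₀
  · exact hx i j α β hα hα'.le hβ₀ (by omega) hne
  · rw [← sub_ne_zero, ← q_sub_q_of_modEq (by omega) i j (α' := ℓ) (β' := ℓ - 1)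
      (by rw [show α = 0 by omega]; exact Int.emod_self.symm) (by omega), sub_ne_zero]
    exact hx i j ℓ (ℓ - 1) (by omega) le_rfl (by omega) (by omega)
      (by rw [Ne, Prod.mk.injEq]; omega)

/-- `∂q_m^ν / ∂q_j^β` -/
def dq (ℓ : ℕ) (j : Fin N) (β : ℤ) (m : Fin N) (ν : ℤ) : ℝ :=
  if m = j ∧ ν ≡ β [ZMOD ℓ] then 1 else 0

theorem hasDerivAt_q_update {β : ℤ} (hβ : 0 ≤ β) (hβ' : β < ℓ) (j m : Fin N) (ν : ℤ)
    (x : M N) (t : ℝ) :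
    HasDerivAt (fun t => q N ℓ γ m ν (Function.update x.1 (j, β.toNat) t, x.2))
      (dq ℓ j β m ν) t := by
  simp only [q, dq, Function.update_apply, Prod.mk.injEq, Int.toNat_emod_eq_toNat_iff hβ hβ']
  split_ifs
  · exact (hasDerivAt_id t).sub_const _
  · exact hasDerivAt_const _ _

theorem pdq_u {s : ℤ} {i j : Fin N} {α β : ℤ} (hβ : 0 ≤ β) (hβ' : β < ℓ) {x : M N}
    (hnum : ∀ m, q N ℓ γ i α x ≠ q N ℓ γ m (α + s) x)
    (hden : ∀ m ≠ i, q N ℓ γ i α x ≠ q N ℓ γ m α x) :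
    pdq N j β.toNat (u N ℓ γ s i α) x = u N ℓ γ s i α x *
      (∑ m, (dq ℓ j β i α - dq ℓ j β m (α + s)) / (q N ℓ γ i α x - q N ℓ γ m (α + s) x) -
        ∑ m ∈ univ.erase i, (dq ℓ j β i α - dq ℓ j β m α) / (q N ℓ γ i α x - q N ℓ γ m α x)) := by
  set t₀ := x.1 (j, β.toNat)
  set Q : Fin N → ℤ → ℝ → ℝ :=
    fun m ν t => q N ℓ γ m ν (Function.update x.1 (j, β.toNat) t, x.2)
  have hQ₀ : ∀ m ν, Q m ν t₀ = q N ℓ γ m ν x := fun m ν => by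
    simp only [Q, t₀, Function.update_eq_self]
  have hdiff : ∀ m ν, HasDerivAt (fun t => Q i α t - Q m ν t)
      (dq ℓ j β i α - dq ℓ j β m ν) t₀ := fun m ν =>
    (hasDerivAt_q_update hβ hβ' j i α x t₀).sub (hasDerivAt_q_update hβ hβ' j m ν x t₀)
  have hA₀ : ∀ m ∈ univ, Q i α t₀ - Q m (α + s) t₀ ≠ 0 := fun m _ => by
    rw [hQ₀, hQ₀]
    exact sub_ne_zero.2 (hnum m)
  have hB₀ : ∀ m ∈ univ.erase i, Q i α t₀ - Q m α t₀ ≠ 0 := fun m hm => by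
    rw [hQ₀, hQ₀]
    exact sub_ne_zero.2 (hden m (ne_of_mem_erase hm))
  set A : ℝ → ℝ := fun t => ∏ m, (Q i α t - Q m (α + s) t)
  set B : ℝ → ℝ := fun t => ∏ m ∈ univ.erase i, (Q i α t - Q m α t)
  set c := exp (s * p N ℓ i α x)
  have hcA : c * A t₀ ≠ 0 := mul_ne_zero (exp_ne_zero _) (prod_ne_zero_iff.2 hA₀)
  have hB : B t₀ ≠ 0 := prod_ne_zero_iff.2 hB₀
  have hu : pdq N j β.toNat (u N ℓ γ s i α) x = deriv (fun t => c * A t / B t) t₀ := rfl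
  have hu₀ : u N ℓ γ s i α x = c * A t₀ / B t₀ := by
    simp only [A, B, hQ₀]
    rfl
  rw [hu, deriv_eq_mul_logDeriv (f := fun t => c * A t / B t) (div_ne_zero hcA hB), ← hu₀,
    logDeriv_div (f := fun t => c * A t) _ hcA hB
      ((HasDerivAt.fun_finsetProd fun m _ => hdiff m _).differentiableAt.const_mul _)
      (HasDerivAt.fun_finsetProd fun m _ => hdiff m _).differentiableAt,
    logDeriv_const_mul _ _ (exp_ne_zero _)]
  simp only [A, B, logDeriv_prod_eq_sum_div (fun m _ => hdiff m _) hA₀,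
    logDeriv_prod_eq_sum_div (fun m _ => hdiff m _) hB₀, hQ₀]

theorem pdp_u {α : ℤ} (hα : 0 ≤ α) (hα' : α < ℓ) (s : ℤ) (i k : Fin N) (a : ℕ) (x : M N) :
    pdp N k a (u N ℓ γ s i α) x = if (i, α.toNat) = (k, a) then s * u N ℓ γ s i α x else 0 := by
  have hmod : (α % ℓ).toNat = α.toNat := by rw [Int.emod_eq_of_lt hα hα']
  set R := chi N ℓ γ (α + s) (q N ℓ γ i α x) x /
    ∏ m ∈ univ.erase i, (q N ℓ γ i α x - q N ℓ γ m α x)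
  have hu : ∀ y, u N ℓ γ s i α (x.1, y) = exp (s * y (i, α.toNat)) * R := by
    intro y
    simp only [u, p, hmod, mul_div_assoc]
    rfl
  simp only [pdp, hu, Function.update_apply]
  split_ifs with h
  · rw [← h]
    exact (((hasDerivAt_id _).const_mul (s : ℝ)).exp.mul_const R).deriv.trans
      (by simp only [id, mul_one]; ring)
  · exact deriv_const _ _

theorem sum_sum_range_ite_eq {ι : Type*} [Fintype ι] [DecidableEq ι] {F : ι → ℕ → ℝ} {c : ι}
    {b : ℕ} (hb : b < ℓ) :
    ∑ k, ∑ a ∈ range ℓ, (if (c, b) = (k, a) then F k a else 0) = F c b := by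
  simp [Prod.mk.injEq, ite_and, hb]

theorem Pb_u {s : ℤ} {i j : Fin N} {α β : ℤ} (hα : 0 ≤ α) (hα' : α < ℓ) (hβ : 0 ≤ β)
    (hβ' : β < ℓ) (x : M N) :
    Pb N ℓ (u N ℓ γ s i α) (u N ℓ γ s j β) x =
      s * u N ℓ γ s j β x * pdq N j β.toNat (u N ℓ γ s i α) x -
        s * u N ℓ γ s i α x * pdq N i α.toNat (u N ℓ γ s j β) x := by
  simp only [Pb, pdp_u hα hα', pdp_u hβ hβ', mul_ite, ite_mul, mul_zero, zero_mul,
    sum_sub_distrib, sum_sum_range_ite_eq (by omega : β.toNat < ℓ),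
    sum_sum_range_ite_eq (by omega : α.toNat < ℓ)]
  ring

/-- `∂ log u_i^{α,s} / ∂ q_j^β`, for `(j, β) ≠ (i, α)` -/
noncomputable def dlogU (N ℓ : ℕ) (γ : ℝ) (s : ℤ) (i j : Fin N) (α β : ℤ) (x : M N) : ℝ :=
  (if α = β then 1 / (q N ℓ γ i α x - q N ℓ γ j α x) else 0) -
    if α + s ≡ β [ZMOD ℓ] then 1 / (q N ℓ γ i α x - q N ℓ γ j (α + s) x) else 0

theorem pdq_u_of_ne {s : ℤ} {i j : Fin N} {α β : ℤ} (hα : 0 ≤ α) (hα' : α < ℓ) (hβ : 0 ≤ β)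
    (hβ' : β < ℓ) {x : M N} (hnum : ∀ m, q N ℓ γ i α x ≠ q N ℓ γ m (α + s) x)
    (hden : ∀ m ≠ i, q N ℓ γ i α x ≠ q N ℓ γ m α x) (hne : (i, α) ≠ (j, β)) :
    pdq N j β.toNat (u N ℓ γ s i α) x = u N ℓ γ s i α x * dlogU N ℓ γ s i j α β x := by
  have hαβ : α ≡ β [ZMOD ℓ] ↔ α = β := Int.modEq_iff_eq_of_lt hα hα' hβ hβ'
  have hself : dq ℓ j β i α = 0 :=
    if_neg fun h => hne (Prod.ext h.1 (hαβ.1 h.2))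
  rw [pdq_u hβ hβ' hnum hden, hself, dlogU]
  congr 1
  simp only [dq, zero_sub, neg_div, sum_neg_distrib, ite_and, ite_div, zero_div, sum_ite_eq',
    mem_univ, if_true, hαβ]
  by_cases h : α = β
  · rw [if_pos (mem_erase.2 ⟨fun hji => hne (by rw [hji, h]), mem_univ j⟩)]
    ring
  · simp only [h, if_false, ite_self]
    ring

theorem pdq_u_of_mem_U {x : M N} (hx : x ∈ U N ℓ γ) {s : ℤ} (hs : s = 1 ∨ s = -1) {i j : Fin N}
    {α β : ℤ} (hα : 0 ≤ α) (hα' : α < ℓ) (hβ : 0 ≤ β) (hβ' : β < ℓ) (hne : (i, α) ≠ (j, β)) :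
    pdq N j β.toNat (u N ℓ γ s i α) x = u N ℓ γ s i α x * dlogU N ℓ γ s i j α β x :=
  pdq_u_of_ne hα hα' hβ hβ'
    (fun m => q_ne_q_of_mem_U hx hα hα' (by omega) (by omega) (by rw [Ne, Prod.mk.injEq]; omega))
    (fun m hm => q_ne_q_of_mem_U hx hα hα' (by omega) (by omega) (by simp [Ne.symm hm])) hne

/-- `C^{αβ}_{ij}` -/
noncomputable def cfac (N ℓ : ℕ) (γ : ℝ) (i j : Fin N) (α β : ℤ) (x : M N) : ℝ :=
  if (α, β) = ((0 : ℤ), (ℓ : ℤ) - 1) then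
    1 / (q N ℓ γ i ℓ x - q N ℓ γ j ((ℓ : ℤ) - 1) x)
  else if (α, β) = ((ℓ : ℤ) - 1, (0 : ℤ)) then
    1 / (q N ℓ γ i ((ℓ : ℤ) - 1) x - q N ℓ γ j ℓ x)
  else 1 / (q N ℓ γ i α x - q N ℓ γ j β x)

theorem cfac_self (hℓ : ℓ ≠ 1) (i j : Fin N) (α : ℤ) (x : M N) :
    cfac N ℓ γ i j α α x = 1 / (q N ℓ γ i α x - q N ℓ γ j α x) := by
  rw [cfac, if_neg, if_neg] <;> simp only [Prod.mk.injEq] <;> omega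

theorem cfac_swap (hℓ : ℓ ≠ 1) (i j : Fin N) (α β : ℤ) (x : M N) :
    cfac N ℓ γ j i β α x = -cfac N ℓ γ i j α β x := by
  simp only [cfac, Prod.mk.injEq]
  split_ifs <;> first | omega | rw [← neg_sub, div_neg]

theorem cfac_of_add_modEq (hℓ : 3 ≤ ℓ) {s : ℤ} (hs : s = 1 ∨ s = -1) (i j : Fin N) {α β : ℤ}
    (hα : 0 ≤ α) (hα' : α < ℓ) (hβ : 0 ≤ β) (hβ' : β < ℓ) (h : α + s ≡ β [ZMOD ℓ]) (x : M N) :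
    cfac N ℓ γ i j α β x = 1 / (q N ℓ γ i α x - q N ℓ γ j (α + s) x) := by
  rcases h.eq_sub_or_eq_or_eq_add (abs_le.2 ⟨by omega, by omega⟩) with hb | rfl | hb
  · obtain ⟨rfl, rfl, rfl⟩ : s = 1 ∧ α = ℓ - 1 ∧ β = 0 := by omega
    rw [cfac, if_neg (by simp only [Prod.mk.injEq]; omega), if_pos rfl, sub_add_cancel]
  · rw [cfac, if_neg, if_neg] <;> simp only [Prod.mk.injEq] <;> omega
  · obtain ⟨rfl, rfl, rfl⟩ : s = -1 ∧ α = 0 ∧ β = ℓ - 1 := by omega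
    rw [cfac, if_pos rfl, q_sub_q_of_modEq (by omega) i j (α := 0) (β := 0 + -1)
      (Int.modEq_iff_dvd.2 (by simp)) (by ring)]

theorem dmod_eq (α β : ℤ) : dmod ℓ α β = if α ≡ β [ZMOD ℓ] then 1 else 0 := rfl

theorem kappa_self (hℓ : 2 ≤ ℓ) (α : ℤ) : kappa ℓ α α = 2 := by
  have h : ¬ α + 1 ≡ α [ZMOD ℓ] := Int.not_add_modEq_self (by omega) (Or.inl rfl)
  simp only [kappa, dmod_eq]
  rw [if_pos (Int.ModEq.refl α), if_neg h, if_neg (fun h' => h h'.symm)]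
  ring

theorem kappa_of_ne {s : ℤ} (hs : s = 1 ∨ s = -1) {α β : ℤ} (hα : 0 ≤ α) (hα' : α < ℓ)
    (hβ : 0 ≤ β) (hβ' : β < ℓ) (hne : α ≠ β) :
    kappa ℓ α β =
      -((if α + s ≡ β [ZMOD ℓ] then 1 else 0) + if β + s ≡ α [ZMOD ℓ] then 1 else 0) := by
  have h : ¬ α ≡ β [ZMOD ℓ] := fun h => hne ((Int.modEq_iff_eq_of_lt hα hα' hβ hβ').1 h)
  simp only [kappa, dmod_eq]
  rw [if_neg h]
  rcases hs with rfl | rfl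
  · simp only [Int.modEq_comm (a := α) (b := β + 1)]
    ring
  · simp only [Int.add_neg_one_modEq_iff, Int.modEq_comm (a := α) (b := β + 1)]
    ring

theorem dlogU_self (hℓ : 2 ≤ ℓ) {s : ℤ} (hs : s = 1 ∨ s = -1) (i j : Fin N) (α : ℤ) (x : M N) :
    dlogU N ℓ γ s i j α α x = 1 / (q N ℓ γ i α x - q N ℓ γ j α x) := by
  rw [dlogU, if_pos rfl, if_neg (Int.not_add_modEq_self (by omega) hs), sub_zero]

theorem dlogU_of_ne (hℓ : 3 ≤ ℓ) {s : ℤ} (hs : s = 1 ∨ s = -1) (i j : Fin N) {α β : ℤ}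
    (hα : 0 ≤ α) (hα' : α < ℓ) (hβ : 0 ≤ β) (hβ' : β < ℓ) (hne : α ≠ β) (x : M N) :
    dlogU N ℓ γ s i j α β x = -if α + s ≡ β [ZMOD ℓ] then cfac N ℓ γ i j α β x else 0 := by
  rw [dlogU, if_neg hne, zero_sub]
  split_ifs with h
  · rw [cfac_of_add_modEq hℓ hs i j hα hα' hβ hβ' h]
  · rfl

theorem dlogU_sub_dlogU (hℓ : 3 ≤ ℓ) {s : ℤ} (hs : s = 1 ∨ s = -1) (i j : Fin N) {α β : ℤ}
    (hα : 0 ≤ α) (hα' : α < ℓ) (hβ : 0 ≤ β) (hβ' : β < ℓ) (x : M N) :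
    dlogU N ℓ γ s i j α β x - dlogU N ℓ γ s j i β α x = kappa ℓ α β * cfac N ℓ γ i j α β x := by
  rcases eq_or_ne α β with rfl | hne
  · rw [dlogU_self (by omega) hs, dlogU_self (by omega) hs, kappa_self (by omega),
      cfac_self (by omega), ← neg_sub (q N ℓ γ i α x), div_neg]
    ring
  · rw [dlogU_of_ne hℓ hs i j hα hα' hβ hβ' hne, dlogU_of_ne hℓ hs j i hβ hβ' hα hα' hne.symm,
      kappa_of_ne hs hα hα' hβ hβ' hne, cfac_swap (by omega)]
    split_ifs <;> ring

end

theorem monopole_bracket_rational_general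
    (N ℓ : ℕ) (hℓ : 3 ≤ ℓ) (γ : ℝ)
    (s : ℤ) (hs : s = 1 ∨ s = -1)
    (i j : Fin N) (α β : ℤ) (hα : 0 ≤ α) (hα' : α < ℓ) (hβ : 0 ≤ β) (hβ' : β < ℓ)
    (x : M N) (hx : x ∈ U N ℓ γ) :
    Pb N ℓ (u N ℓ γ s i α) (u N ℓ γ s j β) x =
      (s : ℝ) * (1 - (if i = j then (1 : ℝ) else 0) * (if α = β then (1 : ℝ) else 0)) *
        kappa ℓ α β * u N ℓ γ s i α x * u N ℓ γ s j β x *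
        (if (α, β) = ((0 : ℤ), (ℓ : ℤ) - 1) then
            1 / (q N ℓ γ i ℓ x - q N ℓ γ j ((ℓ : ℤ) - 1) x)
         else if (α, β) = ((ℓ : ℤ) - 1, (0 : ℤ)) then
            1 / (q N ℓ γ i ((ℓ : ℤ) - 1) x - q N ℓ γ j ℓ x)
         else 1 / (q N ℓ γ i α x - q N ℓ γ j β x)) := by
  by_cases hne : (i, α) = (j, β)
  · obtain ⟨rfl, rfl⟩ := Prod.ext_iff.1 hne
    rw [Pb_u hα hα' hα hα', if_pos rfl, if_pos rfl]
    ring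
  have hδ : (if i = j then (1 : ℝ) else 0) * (if α = β then 1 else 0) = 0 := by
    split_ifs with h₁ h₂ <;> first | exact absurd (Prod.ext h₁ h₂) hne | simp
  rw [Pb_u hα hα' hβ hβ', pdq_u_of_mem_U hx hs hα hα' hβ hβ' hne,
    pdq_u_of_mem_U hx hs hβ hβ' hα hα' (Ne.symm hne), hδ]
  change _ = _ * cfac N ℓ γ i j α β x
  linear_combination (s * u N ℓ γ s i α x * u N ℓ γ s j β x) *
    dlogU_sub_dlogU (γ := γ) hℓ hs i j hα hα' hβ hβ' x

/-- Poisson brackets of like-sign γ-deformed monopole operators. -/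
theorem monopole_bracket_rational
    (N ℓ : ℕ) (hN : 1 ≤ N) (hℓ : 3 ≤ ℓ) (γ : ℝ) (hγ : γ ≠ 0)
    (s : ℤ) (hs : s = 1 ∨ s = -1)
    (i j : Fin N) (α β : ℤ) (hα : 0 ≤ α) (hα' : α < ℓ) (hβ : 0 ≤ β) (hβ' : β < ℓ)
    (x : M N) (hx : x ∈ U N ℓ γ) :
    Pb N ℓ (u N ℓ γ s i α) (u N ℓ γ s j β) x =
      (s : ℝ) * (1 - (if i = j then (1 : ℝ) else 0) * (if α = β then (1 : ℝ) else 0)) *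
        kappa ℓ α β * u N ℓ γ s i α x * u N ℓ γ s j β x *
        (if (α, β) = ((0 : ℤ), (ℓ : ℤ) - 1) then
            1 / (q N ℓ γ i ℓ x - q N ℓ γ j ((ℓ : ℤ) - 1) x)
         else if (α, β) = ((ℓ : ℤ) - 1, (0 : ℤ)) then
            1 / (q N ℓ γ i ((ℓ : ℤ) - 1) x - q N ℓ γ j ℓ x)
         else 1 / (q N ℓ γ i α x - q N ℓ γ j β x)) :=
  monopole_bracket_rational_general N ℓ hℓ γ s hs i j α β hα hα' hβ hβ' x hx

end SpinRS
end

section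
/- For every integer n ≥ 1 one has Σ_{α=1}^{ℓ} J^{αα}[n] = −γ · Tr(L^n), i.e. the trace of the loop-algebra matrix J[n] equals −γ times the n-th Hamiltonian. -/
/-!
With `D^α = diag(q_1^α, …, q_N^α)`, the Cauchy form of `L^{α,+}` gives the rank-one identity
`e u^{α+} = L^{α-1,+} D^α - D^{α-1} L^{α-1,+}`. Writing `J^{αα}[n] = tr(e u^{α+} L^{α,+} ⋯ L^{α+nℓ-2,+})`,
ℓ-periodicity of the `L^{α,±}` and cyclicity of the trace turn it into `T_α - T_{α-1}` with
`T_α = tr(D^α L^{α,+} ⋯ L^{α+nℓ-1,+})` (for `n = 0` this is the definition of `J^{αα}[0]`).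
The sum over `α` telescopes to `T_ℓ - T_0`, and `D^ℓ = D^0 - γ` while the product of `L`'s is
unchanged, so it equals `-γ tr(L^n)`.
-/

open Real Finset Matrix Kronecker

namespace SpinRS

section

variable {N ℓ : ℕ} {γ : ℝ} {x : M N}

theorem sum_Icc_sub_pred {G : Type*} [AddCommGroup G] (f : ℤ → G) (m : ℕ) :
    ∑ α ∈ Finset.Icc (1 : ℤ) m, (f α - f (α - 1)) = f m - f 0 := by
  rw [Int.Icc_eq_finset_map, Finset.sum_map, add_sub_cancel_right, Int.toNat_natCast]
  convert Finset.sum_range_sub (fun k : ℕ => f k) m using 2 with k <;> simp [add_comm]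

lemma q_add_mul_ell (hℓ : ℓ ≠ 0) (i : Fin N) (α m : ℤ) :
    q N ℓ γ i (α + ℓ * m) x = q N ℓ γ i α x - γ * m := by
  rw [q, q, Int.add_mul_emod_self_left, Int.add_mul_ediv_left _ _ (by exact_mod_cast hℓ)]
  push_cast
  ring

lemma q_add_ell (hℓ : ℓ ≠ 0) (i : Fin N) (α : ℤ) :
    q N ℓ γ i (α + ℓ) x = q N ℓ γ i α x - γ := by
  simpa using q_add_mul_ell (γ := γ) (x := x) hℓ i α 1

lemma p_periodic (i : Fin N) : Function.Periodic (fun α => p N ℓ i α x) ℓ := by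
  intro α
  simp [p]

lemma chi_add_ell (hℓ : ℓ ≠ 0) (α : ℤ) (z : ℝ) :
    chi N ℓ γ (α + ℓ) z x = chi N ℓ γ α (z + γ) x := by
  unfold chi
  refine Finset.prod_congr rfl fun i _ => ?_
  rw [q_add_ell hℓ]
  ring

lemma u_periodic (hℓ : ℓ ≠ 0) (s : ℤ) (i : Fin N) :
    Function.Periodic (fun α => u N ℓ γ s i α x) ℓ := by
  intro α
  simp only [u, p_periodic i α, add_right_comm α (ℓ : ℤ) s, chi_add_ell hℓ, q_add_ell hℓ,
    sub_add_cancel, sub_sub_sub_cancel_right]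

lemma Lmat_periodic (hℓ : ℓ ≠ 0) (s : ℤ) :
    Function.Periodic (fun α => Lmat N ℓ γ s α x) ℓ := by
  intro α
  ext i j
  simp only [Lmat, Matrix.of_apply, add_right_comm α (ℓ : ℤ) 1, u_periodic hℓ s j (α + 1),
    q_add_ell hℓ, sub_sub_sub_cancel_right]

lemma q_succ_ne (hℓ : ℓ ≠ 0) (hx : x ∈ U N ℓ γ) (i j : Fin N) (α : ℤ) :
    q N ℓ γ j (α + 1) x ≠ q N ℓ γ i α x := by
  have hr0 := Int.emod_nonneg α (Int.natCast_ne_zero.mpr hℓ)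
  have hrℓ := Int.emod_lt_of_pos α (by omega : (0 : ℤ) < ℓ)
  rw [← Int.emod_add_mul_ediv α ℓ, add_right_comm, q_add_mul_ell hℓ, q_add_mul_ell hℓ, Ne,
    sub_left_inj]
  exact hx j i _ _ (by omega) (by omega) hr0 hrℓ.le (by simp)

noncomputable def qDiag (N ℓ : ℕ) (γ : ℝ) (α : ℤ) (x : M N) : Matrix (Fin N) (Fin N) ℝ :=
  Matrix.diagonal fun i => q N ℓ γ i α x

-- Entrywise, the factor `q_j^{α+1} - q_i^α` cancels the denominator of `L^α_{ij}`.
lemma Lmat_mul_qDiag_sub_qDiag_mul_Lmat (hℓ : ℓ ≠ 0) (hx : x ∈ U N ℓ γ) (s α : ℤ) :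
    Lmat N ℓ γ s α x * qDiag N ℓ γ (α + 1) x - qDiag N ℓ γ α x * Lmat N ℓ γ s α x =
      Matrix.of fun _ j => u N ℓ γ s j (α + 1) x := by
  ext i j
  have hne : q N ℓ γ j (α + 1) x - q N ℓ γ i α x ≠ 0 := sub_ne_zero.mpr (q_succ_ne hℓ hx i j α)
  simp only [qDiag, Matrix.sub_apply, Matrix.mul_diagonal, Matrix.diagonal_mul, Matrix.of_apply,
    Lmat]
  field_simp

lemma prodL_eq_prod_map (s α : ℤ) (m : ℕ) :
    prodL N ℓ γ s α m x = ((List.range m).map fun k : ℕ => Lmat N ℓ γ s (α + k) x).prod := by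
  simp [prodL, ← List.map_eq_flatMap, Function.comp_def]

lemma prodL_add (s α : ℤ) (m k : ℕ) :
    prodL N ℓ γ s α (m + k) x = prodL N ℓ γ s α m x * prodL N ℓ γ s (α + m) k x := by
  simp [prodL_eq_prod_map, List.range_add, Function.comp_def, add_assoc]

lemma prodL_succ (s α : ℤ) (m : ℕ) :
    prodL N ℓ γ s α (m + 1) x = prodL N ℓ γ s α m x * Lmat N ℓ γ s (α + m) x := by
  simp [prodL_eq_prod_map, List.range_succ]

lemma prodL_succ' (s α : ℤ) (m : ℕ) :
    prodL N ℓ γ s α (m + 1) x = Lmat N ℓ γ s α x * prodL N ℓ γ s (α + 1) m x := by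
  rw [add_comm, prodL_add]
  simp [prodL_eq_prod_map]

lemma prodL_periodic (hℓ : ℓ ≠ 0) (s : ℤ) (m : ℕ) :
    Function.Periodic (fun α => prodL N ℓ γ s α m x) ℓ := by
  intro α
  simp only [prodL_eq_prod_map, add_right_comm α (ℓ : ℤ), Lmat_periodic hℓ s _]

lemma prodL_zero_nat_mul_eq_Ltot_pow (hℓ : ℓ ≠ 0) (n : ℕ) :
    prodL N ℓ γ 1 0 (n * ℓ) x = Ltot N ℓ γ x ^ n := by
  induction n with
  | zero => simp [prodL_eq_prod_map]
  | succ n ih =>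
    rw [add_mul, one_mul, prodL_add, ih, pow_succ, Ltot]
    congr 1
    simpa using (prodL_periodic hℓ 1 ℓ).nat_mul n 0

lemma Vgen_eq_trace (s α β : ℤ) :
    Vgen N ℓ γ s α β x =
      Matrix.trace ((Matrix.of fun _ j => u N ℓ γ s j α x) * prodL N ℓ γ s α (β - α).toNat x) := by
  rw [Vgen, Finset.sum_comm]
  simp [Matrix.trace, Matrix.mul_apply]

noncomputable def qTrace (N ℓ : ℕ) (γ : ℝ) (n : ℕ) (α : ℤ) (x : M N) : ℝ :=
  Matrix.trace (qDiag N ℓ γ α x * prodL N ℓ γ 1 α (n * ℓ) x)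

lemma Jgen_diag_eq_qTrace_sub (hℓ : ℓ ≠ 0) (hx : x ∈ U N ℓ γ) (n : ℕ) (α : ℤ) :
    Jgen N ℓ γ α α n x = qTrace N ℓ γ n α x - qTrace N ℓ γ n (α - 1) x := by
  rcases Nat.eq_zero_or_pos n with rfl | hn
  · simp [Jgen, qTrace, qDiag, prodL_eq_prod_map, Matrix.trace, Finset.sum_sub_distrib]
  obtain ⟨m, hm⟩ : ∃ m, n * ℓ = m + 1 :=
    Nat.exists_eq_add_one.mpr (Nat.mul_pos hn (Nat.pos_of_ne_zero hℓ))
  have hm' : (m : ℤ) = n * ℓ - 1 := by rw [← Nat.cast_mul, hm]; push_cast; ring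
  have hperiod : Lmat N ℓ γ 1 (α + m) x = Lmat N ℓ γ 1 (α - 1) x := by
    rw [hm', show α + (n * ℓ - 1) = α - 1 + n * ℓ by ring]
    exact (Lmat_periodic hℓ 1).nat_mul n (α - 1)
  calc Jgen N ℓ γ α α n x
      = Matrix.trace ((Lmat N ℓ γ 1 (α - 1) x * qDiag N ℓ γ α x
          - qDiag N ℓ γ (α - 1) x * Lmat N ℓ γ 1 (α - 1) x) * prodL N ℓ γ 1 α m x) := by
        have hrank := Lmat_mul_qDiag_sub_qDiag_mul_Lmat hℓ hx 1 (α - 1)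
        rw [sub_add_cancel] at hrank
        rw [hrank, Jgen, if_pos (by exact_mod_cast hn), Vgen_eq_trace]
        congr
        omega
    _ = Matrix.trace (qDiag N ℓ γ α x * (prodL N ℓ γ 1 α m x * Lmat N ℓ γ 1 (α + m) x))
        - Matrix.trace (qDiag N ℓ γ (α - 1) x *
            (Lmat N ℓ γ 1 (α - 1) x * prodL N ℓ γ 1 (α - 1 + 1) m x)) := by
        rw [sub_mul, Matrix.trace_sub, Matrix.mul_assoc, Matrix.trace_mul_comm, hperiod,
          sub_add_cancel, Matrix.mul_assoc, Matrix.mul_assoc]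
    _ = qTrace N ℓ γ n α x - qTrace N ℓ γ n (α - 1) x := by
        rw [← prodL_succ, ← prodL_succ', ← hm, qTrace, qTrace]

lemma qTrace_add_ell (hℓ : ℓ ≠ 0) (n : ℕ) (α : ℤ) :
    qTrace N ℓ γ n (α + ℓ) x =
      qTrace N ℓ γ n α x - γ * Matrix.trace (prodL N ℓ γ 1 α (n * ℓ) x) := by
  simp only [qTrace, qDiag, prodL_periodic hℓ 1 _ α, Matrix.trace, Matrix.diag_apply,
    Matrix.diagonal_mul, q_add_ell hℓ, sub_mul, Finset.sum_sub_distrib, Finset.mul_sum]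

end

theorem trace_J_eq_neg_gamma_Ham_general
    (N ℓ : ℕ) (hℓ : 3 ≤ ℓ) (γ : ℝ)
    (n : ℕ) (x : M N) (hx : x ∈ U N ℓ γ) :
    ∑ α ∈ Finset.Icc (1 : ℤ) (ℓ : ℤ), Jgen N ℓ γ α α (n : ℤ) x = -γ * Ham N ℓ γ n x := by
  have hℓ0 : ℓ ≠ 0 := by omega
  calc ∑ α ∈ Finset.Icc (1 : ℤ) ℓ, Jgen N ℓ γ α α n x
      = ∑ α ∈ Finset.Icc (1 : ℤ) ℓ, (qTrace N ℓ γ n α x - qTrace N ℓ γ n (α - 1) x) :=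
        Finset.sum_congr rfl fun α _ => Jgen_diag_eq_qTrace_sub hℓ0 hx n α
    _ = qTrace N ℓ γ n (0 + ℓ) x - qTrace N ℓ γ n 0 x := by rw [sum_Icc_sub_pred, zero_add]
    _ = -γ * Ham N ℓ γ n x := by
        rw [qTrace_add_ell hℓ0, Ham, ← prodL_zero_nat_mul_eq_Ltot_pow hℓ0]
        ring

/-- `tr J[n] = -γ H[n]`. -/
theorem trace_J_eq_neg_gamma_Ham
    (N ℓ : ℕ) (hN : 1 ≤ N) (hℓ : 3 ≤ ℓ) (γ : ℝ) (hγ : γ ≠ 0)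
    (n : ℕ) (hn : 1 ≤ n) (x : M N) (hx : x ∈ U N ℓ γ) :
    ∑ α ∈ Finset.Icc (1 : ℤ) (ℓ : ℤ), Jgen N ℓ γ α α (n : ℤ) x = -γ * Ham N ℓ γ n x :=
  trace_J_eq_neg_gamma_Ham_general N ℓ hℓ γ n x hx

end SpinRS
end

section
/- For all α, β ∈ {0,…,ℓ−1} and all positive real numbers z ≠ w such that z and w are distinct from every Q_i^μ with 0 ≤ μ ≤ ℓ, the following identities of smooth functions on U hold (the Poisson bracket is taken in the phase-space variables, with z and w fixed parameters): {h^α(z), h^β(w)} = 0; {χ̃^α(z), e^β(w)} = δ^{αβ} χ̃^α(z) (e^β(z) − e^β(w))/(z/w − 1); and {χ̃^α(z), f^β(w)} = −δ^{αβ} χ̃^α(z) (f^β(z) − f^β(w))/(z/w − 1). -/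
open Real Finset Matrix Kronecker

namespace SpinRSK

/-- Phase space: `x`-coordinates and `p`-coordinates indexed by (particle, node). -/
abbrev M (N : ℕ) : Type := ((Fin N × ℕ) → ℝ) × ((Fin N × ℕ) → ℝ)

/-- Extended coordinate `x_i^α`, satisfying `x_i^{α+ℓ} = x_i^α + log t`. -/
noncomputable def xc (N ℓ : ℕ) (t : ℝ) (i : Fin N) (α : ℤ) (x : M N) : ℝ :=
  x.1 (i, (α % (ℓ : ℤ)).toNat) + Real.log t * ((α / (ℓ : ℤ) : ℤ) : ℝ)

/-- `Q_i^α = exp(x_i^α)`, satisfying `Q_i^{α+ℓ} = t Q_i^α`. -/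
noncomputable def Q (N ℓ : ℕ) (t : ℝ) (i : Fin N) (α : ℤ) (x : M N) : ℝ :=
  Real.exp (xc N ℓ t i α x)

/-- Extended momentum coordinate `p_i^α`, satisfying `p_i^{α+ℓ} = p_i^α`. -/
def p (N ℓ : ℕ) (i : Fin N) (α : ℤ) (x : M N) : ℝ :=
  x.2 (i, (α % (ℓ : ℤ)).toNat)

/-- Partial derivative with respect to the coordinate `x_i^a`, `0 ≤ a < ℓ`. -/
noncomputable def pdx (N : ℕ) (i : Fin N) (a : ℕ) (f : M N → ℝ) (x : M N) : ℝ :=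
  deriv (fun s : ℝ => f (Function.update x.1 (i, a) s, x.2)) (x.1 (i, a))

/-- Partial derivative with respect to the coordinate `p_i^a`, `0 ≤ a < ℓ`. -/
noncomputable def pdp (N : ℕ) (i : Fin N) (a : ℕ) (f : M N → ℝ) (x : M N) : ℝ :=
  deriv (fun s : ℝ => f (x.1, Function.update x.2 (i, a) s)) (x.2 (i, a))

/-- The Poisson bracket `{f, g}`. -/
noncomputable def Pb (N ℓ : ℕ) (f g : M N → ℝ) (x : M N) : ℝ :=
  ∑ i : Fin N, ∑ a ∈ Finset.range ℓ,
    (pdx N i a f x * pdp N i a g x - pdp N i a f x * pdx N i a g x)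

/-- The open set `U` where the extended coordinates are pairwise distinct. -/
def U (N ℓ : ℕ) (t : ℝ) : Set (M N) :=
  {x | ∀ (i j : Fin N) (α β : ℤ), 0 ≤ α → α ≤ ℓ → 0 ≤ β → β ≤ ℓ →
    (i, α) ≠ (j, β) → xc N ℓ t i α x ≠ xc N ℓ t j β x}

/-- The K-theoretic gauge polynomial `χ^α(z)`. -/
noncomputable def chi (N ℓ : ℕ) (t : ℝ) (α : ℤ) (z : ℝ) (x : M N) : ℝ :=
  ∏ i : Fin N, (Real.sqrt (z / Q N ℓ t i α x) - Real.sqrt (Q N ℓ t i α x / z))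

/-- The t-deformed K-theoretic monopole operator `u_i^{α,s}` (`s = ±1`). -/
noncomputable def u (N ℓ : ℕ) (t : ℝ) (s : ℤ) (i : Fin N) (α : ℤ) (x : M N) : ℝ :=
  Real.exp ((s : ℝ) * p N ℓ i α x) * chi N ℓ t (α + s) (Q N ℓ t i α x) x /
    ∏ j ∈ Finset.univ.erase i,
      (Real.sqrt (Q N ℓ t i α x / Q N ℓ t j α x) -
        Real.sqrt (Q N ℓ t j α x / Q N ℓ t i α x))

/-- Kronecker delta modulo `ℓ`. -/
def dmod (ℓ : ℕ) (α β : ℤ) : ℝ := if α % (ℓ : ℤ) = β % (ℓ : ℤ) then 1 else 0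

/-- The Cartan matrix `κ^{αβ}` of the necklace quiver. -/
def kappa (ℓ : ℕ) (α β : ℤ) : ℝ :=
  2 * dmod ℓ α β - dmod ℓ (α + 1) β - dmod ℓ α (β + 1)

/-- One-site `L`-operator `L^α` as a matrix-valued function. -/
noncomputable def Lmat (N ℓ : ℕ) (t : ℝ) (α : ℤ) (x : M N) :
    Matrix (Fin N) (Fin N) ℝ :=
  Matrix.of fun i j =>
    u N ℓ t 1 j (α + 1) x / (1 - Q N ℓ t j (α + 1) x / Q N ℓ t i α x)

/-- The ordered product `L^α L^{α+1} ⋯ L^{α+n-1}`. -/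
noncomputable def prodL (N ℓ : ℕ) (t : ℝ) (α : ℤ) (n : ℕ) (x : M N) :
    Matrix (Fin N) (Fin N) ℝ :=
  ((List.range n).map (fun k => Lmat N ℓ t (α + (k : ℤ)) x)).prod

/-- The total `L`-operator `L = L^0 L^1 ⋯ L^{ℓ-1}`. -/
noncomputable def Ltot (N ℓ : ℕ) (t : ℝ) (x : M N) : Matrix (Fin N) (Fin N) ℝ :=
  prodL N ℓ t 0 ℓ x

/-- The Hamiltonians `H[n] = Tr(L^n)`. -/
noncomputable def Ham (N ℓ : ℕ) (t : ℝ) (n : ℕ) (x : M N) : ℝ :=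
  Matrix.trace (Ltot N ℓ t x ^ n)

/-- The matrix Poisson bracket `{A₁, B₂}` in `End(ℝ^N) ⊗ End(ℝ^N)`. -/
noncomputable def PbMat (N ℓ : ℕ) (A B : M N → Matrix (Fin N) (Fin N) ℝ) (x : M N) :
    Matrix (Fin N × Fin N) (Fin N × Fin N) ℝ :=
  Matrix.of fun ik jl => Pb N ℓ (fun y => A y ik.1 jl.1) (fun y => B y ik.2 jl.2) x

/-- Matrix unit `e_{ij}`. -/
noncomputable def Eu (N : ℕ) (i j : Fin N) : Matrix (Fin N) (Fin N) ℝ :=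
  Matrix.single i j 1

/-- The matrix `r^α`. -/
noncomputable def rmat (N ℓ : ℕ) (t : ℝ) (α : ℤ) (x : M N) :
    Matrix (Fin N × Fin N) (Fin N × Fin N) ℝ :=
  ∑ i : Fin N, ∑ j ∈ Finset.univ.erase i,
    ((1 / (Q N ℓ t i α x / Q N ℓ t j α x - 1)) • Eu N i i
      - (1 / (1 - Q N ℓ t j α x / Q N ℓ t i α x)) • Eu N i j) ⊗ₖ (Eu N j j - Eu N j i)

/-- The matrix `r̄^α` (shifted by `-1/2`). -/
noncomputable def rbar (N ℓ : ℕ) (t : ℝ) (α : ℤ) (x : M N) :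
    Matrix (Fin N × Fin N) (Fin N × Fin N) ℝ :=
  (∑ i : Fin N, ∑ j ∈ Finset.univ.erase i,
    (1 / (1 - Q N ℓ t j α x / Q N ℓ t i α x)) • ((Eu N i i - Eu N i j) ⊗ₖ Eu N j j))
  - (1 / 2 : ℝ) • ((1 : Matrix (Fin N) (Fin N) ℝ) ⊗ₖ (1 : Matrix (Fin N) (Fin N) ℝ))

/-- The matrix `r̲^α`. -/
noncomputable def runder (N ℓ : ℕ) (t : ℝ) (α : ℤ) (x : M N) :
    Matrix (Fin N × Fin N) (Fin N × Fin N) ℝ :=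
  ∑ i : Fin N, ∑ j ∈ Finset.univ.erase i,
    (1 / (1 - Q N ℓ t j α x / Q N ℓ t i α x)) •
      (Eu N i j ⊗ₖ Eu N j i - Eu N i i ⊗ₖ Eu N j j)

/-- Swap of the two tensor factors of `End(ℝ^N) ⊗ End(ℝ^N)`. -/
def swapT (N : ℕ) (R : Matrix (Fin N × Fin N) (Fin N × Fin N) ℝ) :
    Matrix (Fin N × Fin N) (Fin N × Fin N) ℝ :=
  Matrix.of fun ik jl => R (ik.2, ik.1) (jl.2, jl.1)

/-- The zero mode `E^α = Σ_i u_i^{α,+}`. -/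
noncomputable def Egen (N ℓ : ℕ) (t : ℝ) (α : ℤ) (x : M N) : ℝ :=
  ∑ i : Fin N, u N ℓ t 1 i α x

/-- The zero mode `F^α = Σ_i u_i^{α,-}`. -/
noncomputable def Fgen (N ℓ : ℕ) (t : ℝ) (α : ℤ) (x : M N) : ℝ :=
  ∑ i : Fin N, u N ℓ t (-1) i α x

/-- The Cartan zero mode `K^α = Π_i Q_i^α (Q_i^{α+1} Q_i^{α-1})^{-1/2}`. -/
noncomputable def Kcar (N ℓ : ℕ) (t : ℝ) (α : ℤ) (x : M N) : ℝ :=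
  ∏ i : Fin N, Q N ℓ t i α x / Real.sqrt (Q N ℓ t i (α + 1) x * Q N ℓ t i (α - 1) x)

/-- Generating series `e^α(z)`. -/
noncomputable def egens (N ℓ : ℕ) (t : ℝ) (α : ℤ) (z : ℝ) (x : M N) : ℝ :=
  ∑ i : Fin N, u N ℓ t 1 i α x / (1 - Q N ℓ t i α x / z)

/-- Generating series `f^α(z)`. -/
noncomputable def fgens (N ℓ : ℕ) (t : ℝ) (α : ℤ) (z : ℝ) (x : M N) : ℝ :=
  ∑ i : Fin N, u N ℓ t (-1) i α x / (1 - Q N ℓ t i α x / z)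

/-- The series `χ̃^α(z) = Π_i (1 - Q_i^α/z)`. -/
noncomputable def chit (N ℓ : ℕ) (t : ℝ) (α : ℤ) (z : ℝ) (x : M N) : ℝ :=
  ∏ i : Fin N, (1 - Q N ℓ t i α x / z)

/-- The series `h^α(z)`. -/
noncomputable def hgens (N ℓ : ℕ) (t : ℝ) (α : ℤ) (z : ℝ) (x : M N) : ℝ :=
  chit N ℓ t (α + 1) z x * chit N ℓ t (α - 1) z x / (chit N ℓ t α z x) ^ 2 *
    ∏ i : Fin N, Q N ℓ t i α x / Real.sqrt (Q N ℓ t i (α + 1) x * Q N ℓ t i (α - 1) x)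

/-- The modified one-site operator `L̃^α = (Q^α)⁻¹ L^α Q^{α+1}`. -/
noncomputable def Ltil (N ℓ : ℕ) (t : ℝ) (α : ℤ) (x : M N) :
    Matrix (Fin N) (Fin N) ℝ :=
  Matrix.of fun i j => Lmat N ℓ t α x i j * Q N ℓ t j (α + 1) x / Q N ℓ t i α x

/-- The ordered product `L̃^α L̃^{α+1} ⋯ L̃^{α+n-1}`. -/
noncomputable def prodLtil (N ℓ : ℕ) (t : ℝ) (α : ℤ) (n : ℕ) (x : M N) :
    Matrix (Fin N) (Fin N) ℝ :=
  ((List.range n).map (fun k => Ltil N ℓ t (α + (k : ℤ)) x)).prod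

/-- The spin variables `a_i^α = (L^0 ⋯ L^{α-2} e)_i`, `α ∈ {1,…,ℓ}`. -/
noncomputable def aspin (N ℓ : ℕ) (t : ℝ) (α : ℤ) (x : M N) (i : Fin N) : ℝ :=
  ∑ j : Fin N, prodL N ℓ t 0 (α - 1).toNat x i j

/-- The spin variables `c_j^α = (u^{α,+} L̃^α ⋯ L̃^{ℓ-1})_j`, `α ∈ {1,…,ℓ}`. -/
noncomputable def cspin (N ℓ : ℕ) (t : ℝ) (α : ℤ) (x : M N) (j : Fin N) : ℝ :=
  ∑ i : Fin N, u N ℓ t 1 i α x * prodLtil N ℓ t α ((ℓ : ℤ) - α).toNat x i j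

/-!
The series `χ̃^α(z)` and `h^α(z)` depend on the positions `x` alone, so `{h^α(z), h^β(w)} = 0`.
The momenta enter `e^β(w)` and `f^β(w)` only through the factors `exp(± p_i^β)` of
`u_i^{β±}`, so `{χ̃^α(z), e^β(w)}` only sees the derivatives `∂χ̃^α(z)/∂x_i^β`, which vanish
unless `α = β`. For `α = β` the bracket is a sum over `i` of terms matched one by one with the
right-hand side by the partial-fraction identity
`-(q/z) / (1 - q/w) = (1 - (1 - q/z)/(1 - q/w)) / (z/w - 1)` at `q = Q_i^α`.
-/
section Calculus

variable {ι κ : Type*} [DecidableEq ι] [DecidableEq κ]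

theorem update_apply_slice_of_ne (v : ι × κ → ℝ) {a c : κ} (h : a ≠ c) (j : ι) (s : ℝ) :
    (fun i => Function.update v (j, a) s (i, c)) = fun i => v (i, c) :=
  funext fun i => Function.update_of_ne (by simp [h.symm]) _ _

theorem update_apply_slice (v : ι × κ → ℝ) (j : ι) (c : κ) (s : ℝ) :
    (fun i => Function.update v (j, c) s (i, c)) = Function.update (fun i => v (i, c)) j s := by
  funext i
  by_cases h : i = j
  · subst h; simp
  · rw [Function.update_of_ne (by simp [h]), Function.update_of_ne h]

theorem deriv_comp_update_slice (v : ι × κ → ℝ) (F : (ι → ℝ) → ℝ) (j : ι) (a c : κ) {F' : ℝ}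
    (hF : HasDerivAt (fun s => F (Function.update (fun i => v (i, c)) j s)) F' (v (j, c))) :
    deriv (fun s => F fun i => Function.update v (j, a) s (i, c)) (v (j, a)) =
      if a = c then F' else 0 := by
  by_cases h : a = c
  · subst h
    simp only [update_apply_slice, if_true]
    exact hF.deriv
  · simp only [update_apply_slice_of_ne v h, if_neg h]
    exact deriv_const _ _

variable [Fintype ι]

theorem hasDerivAt_prod_update {g : ℝ → ℝ} {g' : ℝ} (w : ι → ℝ) (j : ι)
    (hg : HasDerivAt g g' (w j)) :
    HasDerivAt (fun s => ∏ i, g (Function.update w j s i))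
      (g' * ∏ i ∈ univ.erase j, g (w i)) (w j) := by
  have hsplit : (fun s => ∏ i, g (Function.update w j s i)) =
      fun s => g s * ∏ i ∈ univ.erase j, g (w i) := by
    funext s
    rw [← mul_prod_erase _ _ (mem_univ j), Function.update_self]
    congr 1
    exact prod_congr rfl fun i hi => by rw [Function.update_of_ne (ne_of_mem_erase hi)]
  rw [hsplit]
  exact hg.mul_const _

theorem hasDerivAt_sum_update_mul {g : ℝ → ℝ} {g' : ℝ} (w D : ι → ℝ) (j : ι)
    (hg : HasDerivAt g g' (w j)) :
    HasDerivAt (fun s => ∑ i, g (Function.update w j s i) * D i) (g' * D j) (w j) := by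
  have hsplit : (fun s => ∑ i, g (Function.update w j s i) * D i) =
      fun s => g s * D j + ∑ i ∈ univ.erase j, g (w i) * D i := by
    funext s
    rw [← add_sum_erase _ _ (mem_univ j), Function.update_self]
    congr 1
    exact sum_congr rfl fun i hi => by rw [Function.update_of_ne (ne_of_mem_erase hi)]
  rw [hsplit]
  exact (hg.mul_const _).add_const _

end Calculus

section PoissonBracket

variable {N ℓ : ℕ}

theorem pdx_eq_ite_of_slice {f : M N → ℝ} (F : (Fin N → ℝ) → ℝ) (c : ℕ) (x : M N)
    (hf : ∀ q, f (q, x.2) = F fun i => q (i, c)) (j : Fin N) (a : ℕ) {F' : ℝ}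
    (hF : HasDerivAt (fun s => F (Function.update (fun i => x.1 (i, c)) j s)) F' (x.1 (j, c))) :
    pdx N j a f x = if a = c then F' else 0 := by
  simp only [pdx, hf]
  exact deriv_comp_update_slice x.1 F j a c hF

theorem pdp_eq_ite_of_slice {f : M N → ℝ} (F : (Fin N → ℝ) → ℝ) (c : ℕ) (x : M N)
    (hf : ∀ b, f (x.1, b) = F fun i => b (i, c)) (j : Fin N) (a : ℕ) {F' : ℝ}
    (hF : HasDerivAt (fun s => F (Function.update (fun i => x.2 (i, c)) j s)) F' (x.2 (j, c))) :
    pdp N j a f x = if a = c then F' else 0 := by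
  simp only [pdp, hf]
  exact deriv_comp_update_slice x.2 F j a c hF

theorem pdp_eq_zero_of_forall_snd {f : M N → ℝ} (hf : ∀ q b b', f (q, b) = f (q, b'))
    (j : Fin N) (a : ℕ) (x : M N) : pdp N j a f x = 0 := by
  simp only [pdp, hf x.1 _ x.2]
  exact deriv_const _ _

theorem Pb_eq_sum_pdx_mul_pdp {f : M N → ℝ} (hf : ∀ q b b', f (q, b) = f (q, b'))
    (g : M N → ℝ) (x : M N) :
    Pb N ℓ f g x = ∑ j : Fin N, ∑ a ∈ range ℓ, pdx N j a f x * pdp N j a g x := by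
  simp only [Pb, pdp_eq_zero_of_forall_snd hf, zero_mul, sub_zero]

theorem Pb_eq_zero_of_forall_snd {f g : M N → ℝ} (hf : ∀ q b b', f (q, b) = f (q, b'))
    (hg : ∀ q b b', g (q, b) = g (q, b')) (x : M N) : Pb N ℓ f g x = 0 := by
  simp [Pb_eq_sum_pdx_mul_pdp hf, pdp_eq_zero_of_forall_snd hg]

end PoissonBracket

theorem neg_div_mul_div_one_sub_eq {q z w : ℝ} (hz : z ≠ 0) (hw : w ≠ 0) (hqz : q ≠ z)
    (hqw : q ≠ w) (hzw : z ≠ w) (U : ℝ) :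
    -(q / z) * (U / (1 - q / w)) =
      (1 - q / z) * (U / (1 - q / z) - U / (1 - q / w)) / (z / w - 1) := by
  have hz' : z - q ≠ 0 := sub_ne_zero.mpr hqz.symm
  have hw' : w - q ≠ 0 := sub_ne_zero.mpr hqw.symm
  have hzw' : z - w ≠ 0 := sub_ne_zero.mpr hzw
  field_simp
  ring

section Model

variable {N ℓ : ℕ} {t : ℝ} {α : ℤ}

theorem Q_eq_exp_of_lt (hα : 0 ≤ α) (hα' : α < ℓ) (i : Fin N) (y : M N) :
    Q N ℓ t i α y = exp (y.1 (i, α.toNat)) := by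
  simp [Q, xc, Int.emod_eq_of_lt hα hα', Int.ediv_eq_zero_of_lt hα hα']

theorem p_eq_of_lt (hα : 0 ≤ α) (hα' : α < ℓ) (i : Fin N) (y : M N) :
    p N ℓ i α y = y.2 (i, α.toNat) := by
  simp [p, Int.emod_eq_of_lt hα hα']

theorem pdx_chit (hα : 0 ≤ α) (hα' : α < ℓ) (z : ℝ) (x : M N) (j : Fin N) (a : ℕ) :
    pdx N j a (chit N ℓ t α z) x =
      if a = α.toNat then -(Q N ℓ t j α x / z) * ∏ i ∈ univ.erase j, (1 - Q N ℓ t i α x / z)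
      else 0 := by
  simp only [Q_eq_exp_of_lt hα hα']
  refine pdx_eq_ite_of_slice (fun v => ∏ i, (1 - exp (v i) / z)) α.toNat x
    (fun q => by simp only [chit, Q_eq_exp_of_lt hα hα']) j a ?_
  exact hasDerivAt_prod_update _ j (((hasDerivAt_exp _).div_const z).const_sub 1)

theorem pdp_sum_u_div (σ : ℤ) {β : ℤ} (hβ : 0 ≤ β) (hβ' : β < ℓ) (w : ℝ) (x : M N)
    (j : Fin N) (a : ℕ) :
    pdp N j a (fun y => ∑ i, u N ℓ t σ i β y / (1 - Q N ℓ t i β y / w)) x =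
      if a = β.toNat then σ * (u N ℓ t σ j β x / (1 - Q N ℓ t j β x / w)) else 0 := by
  set D : Fin N → ℝ := fun i => chi N ℓ t (β + σ) (Q N ℓ t i β x) x /
    (∏ k ∈ univ.erase i, (√(Q N ℓ t i β x / Q N ℓ t k β x) - √(Q N ℓ t k β x / Q N ℓ t i β x))) /
    (1 - Q N ℓ t i β x / w)
  have hu : ∀ b i, u N ℓ t σ i β (x.1, b) / (1 - Q N ℓ t i β (x.1, b) / w) =
      exp (σ * b (i, β.toNat)) * D i := by
    intro b i
    -- `Q` only reads the positions, so the factor `D i` of `u` is the same at `(x.1, b)` and `x`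
    rw [u, p_eq_of_lt hβ hβ', mul_div_assoc, mul_div_assoc]
    rfl
  rw [pdp_eq_ite_of_slice (fun v => ∑ i, exp (σ * v i) * D i) β.toNat x
    (fun b => sum_congr rfl fun i _ => hu b i) j a
    (hasDerivAt_sum_update_mul _ D j ((hasDerivAt_id _).const_mul (σ : ℝ)).exp)]
  have hux := hu x.2 j
  rw [Prod.mk.eta] at hux
  rw [hux, id, mul_one, mul_comm _ (σ : ℝ), mul_assoc]

theorem Pb_chit_sum_u_div (σ : ℤ) {β : ℤ} (hα : 0 ≤ α) (hα' : α < ℓ)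
    (hβ : 0 ≤ β) (hβ' : β < ℓ) (x : M N) {z w : ℝ} (hz : z ≠ 0) (hw : w ≠ 0) (hzw : z ≠ w)
    (hzQ : ∀ i, Q N ℓ t i α x ≠ z) (hwQ : ∀ i, Q N ℓ t i β x ≠ w) :
    Pb N ℓ (chit N ℓ t α z) (fun y => ∑ i, u N ℓ t σ i β y / (1 - Q N ℓ t i β y / w)) x =
      (if α = β then 1 else 0) * σ * chit N ℓ t α z x *
        (∑ i, u N ℓ t σ i β x / (1 - Q N ℓ t i β x / z) -
          ∑ i, u N ℓ t σ i β x / (1 - Q N ℓ t i β x / w)) / (z / w - 1) := by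
  rw [Pb_eq_sum_pdx_mul_pdp (fun _ _ _ => rfl)]
  simp only [pdx_chit hα hα', pdp_sum_u_div σ hβ hβ', ite_zero_mul_ite_zero]
  split_ifs with hαβ
  · subst hαβ
    have hmem : α.toNat ∈ range ℓ := mem_range.mpr (by omega)
    simp only [and_self, sum_ite_eq', hmem, if_true, ← sum_sub_distrib, mul_sum, sum_div]
    refine sum_congr rfl fun j _ => ?_
    rw [chit, ← mul_prod_erase _ _ (mem_univ j)]
    linear_combination (σ * ∏ i ∈ univ.erase j, (1 - Q N ℓ t i α x / z)) *
      neg_div_mul_div_one_sub_eq hz hw (hzQ j) (hwQ j) hzw (u N ℓ t σ j α x)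
  · have hne : α.toNat ≠ β.toNat := fun h => hαβ (by omega)
    simp only [zero_mul, zero_div]
    refine sum_eq_zero fun j _ => sum_eq_zero fun a _ => if_neg ?_
    rintro ⟨rfl, h⟩
    exact hne h

end Model

theorem toroidal_relations_Ktheoretic_general
    (N ℓ : ℕ) (t : ℝ)
    (α β : ℤ) (hα : 0 ≤ α) (hα' : α < ℓ) (hβ : 0 ≤ β) (hβ' : β < ℓ)
    (x : M N)
    (z w : ℝ) (hz0 : 0 < z) (hw0 : 0 < w) (hzw : z ≠ w)
    (hz : ∀ (i : Fin N) (μ : ℤ), 0 ≤ μ → μ ≤ ℓ → z ≠ Q N ℓ t i μ x)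
    (hw : ∀ (i : Fin N) (μ : ℤ), 0 ≤ μ → μ ≤ ℓ → w ≠ Q N ℓ t i μ x) :
    Pb N ℓ (hgens N ℓ t α z) (hgens N ℓ t β w) x = 0 ∧
    Pb N ℓ (chit N ℓ t α z) (egens N ℓ t β w) x =
      (if α = β then (1 : ℝ) else 0) * chit N ℓ t α z x *
        (egens N ℓ t β z x - egens N ℓ t β w x) / (z / w - 1) ∧
    Pb N ℓ (chit N ℓ t α z) (fgens N ℓ t β w) x =
      -((if α = β then (1 : ℝ) else 0) * chit N ℓ t α z x *
        (fgens N ℓ t β z x - fgens N ℓ t β w x) / (z / w - 1)) := by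
  have bracket (σ : ℤ) := Pb_chit_sum_u_div σ hα hα' hβ hβ' x hz0.ne' hw0.ne' hzw
    (fun i => (hz i α hα hα'.le).symm) (fun i => (hw i β hβ hβ'.le).symm)
  refine ⟨Pb_eq_zero_of_forall_snd (fun _ _ _ => rfl) (fun _ _ _ => rfl) x, ?_, ?_⟩
  · exact (bracket 1).trans (by simp only [egens, Int.cast_one]; ring)
  · exact (bracket (-1)).trans (by simp only [fgens, Int.cast_neg, Int.cast_one]; ring)

/-- classical quantum toroidal relations for the generating series. -/
theorem toroidal_relations_Ktheoretic
    (N ℓ : ℕ) (hN : 1 ≤ N) (hℓ : 3 ≤ ℓ) (t : ℝ) (ht : 0 < t) (ht' : t ≠ 1)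
    (α β : ℤ) (hα : 0 ≤ α) (hα' : α < ℓ) (hβ : 0 ≤ β) (hβ' : β < ℓ)
    (x : M N) (hx : x ∈ U N ℓ t)
    (z w : ℝ) (hz0 : 0 < z) (hw0 : 0 < w) (hzw : z ≠ w)
    (hz : ∀ (i : Fin N) (μ : ℤ), 0 ≤ μ → μ ≤ ℓ → z ≠ Q N ℓ t i μ x)
    (hw : ∀ (i : Fin N) (μ : ℤ), 0 ≤ μ → μ ≤ ℓ → w ≠ Q N ℓ t i μ x) :
    Pb N ℓ (hgens N ℓ t α z) (hgens N ℓ t β w) x = 0 ∧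
    Pb N ℓ (chit N ℓ t α z) (egens N ℓ t β w) x =
      (if α = β then (1 : ℝ) else 0) * chit N ℓ t α z x *
        (egens N ℓ t β z x - egens N ℓ t β w x) / (z / w - 1) ∧
    Pb N ℓ (chit N ℓ t α z) (fgens N ℓ t β w) x =
      -((if α = β then (1 : ℝ) else 0) * chit N ℓ t α z x *
        (fgens N ℓ t β z x - fgens N ℓ t β w x) / (z / w - 1)) :=
  toroidal_relations_Ktheoretic_general N ℓ t α β hα hα' hβ hβ' x z w hz0 hw0 hzw hz hw

end SpinRSK
end

section
/- For all i, j ∈ {1,…,N}, the (i,j) entry of the total L-operator satisfies L_{ij} = (Σ_{ρ=1}^{ℓ} a_i^ρ c_j^ρ)/(1 − Q_j^ℓ/Q_i^0); equivalently, Σ_{ρ=1}^{ℓ} a_i^ρ c_j^ρ = L_{ij} (1 − Q_j^ℓ/Q_i^0), where Q_j^ℓ = t·Q_j^0. -/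
/-!
The sum telescopes. Put `G σ := L^0 ⋯ L^{σ-1} L̃^σ ⋯ L̃^{ℓ-1}`. Away from the diagonal
`Q_j^{α+1} = Q_i^α` one has `L^α - L̃^α = e u^{α+1,+}`, a rank-one matrix, so
`G (σ+1) - G σ = (L^0 ⋯ L^{σ-1} e) (u^{σ+1,+} L̃^{σ+1} ⋯ L̃^{ℓ-1}) = a^{σ+1} c^{σ+1}`.
Hence `∑ ρ, a^ρ c^ρ = G ℓ - G 0 = L - (Q^0)⁻¹ L Q^ℓ`, whose `(i, j)` entry is
`L_{ij} (1 - Q_j^ℓ / Q_i^0)`.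
-/

open Real Finset Matrix Kronecker

theorem List.prod_range_map_sub_prod_range_map {R : Type*} [Ring R] (f g : ℕ → R) (n : ℕ) :
    ((List.range n).map f).prod - ((List.range n).map g).prod =
      ∑ k ∈ Finset.range n, ((List.range k).map f).prod * (f k - g k) *
        ((List.range (n - (k + 1))).map fun m => g (k + 1 + m)).prod := by
  induction n with
  | zero => simp
  | succ n ih =>
    have htail : ∀ k ∈ Finset.range n,
        ((List.range (n + 1 - (k + 1))).map fun m => g (k + 1 + m)).prod =
          ((List.range (n - (k + 1))).map fun m => g (k + 1 + m)).prod * g n := by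
      intro k hk
      rw [Finset.mem_range] at hk
      rw [show n + 1 - (k + 1) = n - (k + 1) + 1 by omega, List.prod_range_succ,
        show k + 1 + (n - (k + 1)) = n by omega]
    rw [List.prod_range_succ, List.prod_range_succ, Finset.sum_range_succ,
      Finset.sum_congr rfl fun k hk => by rw [htail k hk, ← mul_assoc], ← Finset.sum_mul, ← ih,
      Nat.sub_self, List.range_zero, List.map_nil, List.prod_nil, mul_one]
    noncomm_ring

theorem List.prod_range_map_units_conj {M : Type*} [Monoid M] (f : ℕ → M) (d : ℕ → Mˣ)
    (n : ℕ) :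
    ((List.range n).map fun k => ↑(d k)⁻¹ * f k * d (k + 1)).prod =
      ↑(d 0)⁻¹ * ((List.range n).map f).prod * d n := by
  induction n with
  | zero => simp
  | succ n ih =>
    rw [List.prod_range_succ, List.prod_range_succ, ih]
    simp only [mul_assoc, Units.mul_inv_cancel_left]

-- The binder `k` is elaborated as an integer, so the left side maps `F` over `range n` coerced
-- to `List ℤ`; this is how `prodL` and `prodLtil` are elaborated.
theorem List.map_range_natCast {α : Type*} (F : ℤ → α) (n : ℕ) :
    (List.range n).map (fun k => F (k : ℤ)) = (List.range n).map fun k : ℕ => F k := by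
  simp only [List.pure_def, List.bind_eq_flatMap, ← List.map_eq_flatMap, List.map_map]
  rfl

namespace SpinRSK

variable {N ℓ : ℕ} {t : ℝ}

lemma Q_pos (i : Fin N) (α : ℤ) (x : M N) : 0 < Q N ℓ t i α x :=
  Real.exp_pos _

lemma Q_ne_of_mem_U {x : M N} (hx : x ∈ U N ℓ t) {i j : Fin N} {α β : ℤ}
    (hα : 0 ≤ α ∧ α ≤ ℓ) (hβ : 0 ≤ β ∧ β ≤ ℓ) (hne : (i, α) ≠ (j, β)) :
    Q N ℓ t i α x ≠ Q N ℓ t j β x :=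
  Real.exp_injective.ne (hx i j α β hα.1 hα.2 hβ.1 hβ.2 hne)

lemma one_sub_Q_div_Q_ne_zero {x : M N} (hx : x ∈ U N ℓ t) {i j : Fin N} {α β : ℤ}
    (hα : 0 ≤ α ∧ α ≤ ℓ) (hβ : 0 ≤ β ∧ β ≤ ℓ) (hne : (i, α) ≠ (j, β)) :
    1 - Q N ℓ t j β x / Q N ℓ t i α x ≠ 0 :=
  sub_ne_zero.2 fun h =>
    Q_ne_of_mem_U hx hα hβ hne ((div_eq_one_iff_eq (Q_pos i α x).ne').1 h.symm).symm

noncomputable def Qdiag (N ℓ : ℕ) (t : ℝ) (α : ℤ) (x : M N) : (Matrix (Fin N) (Fin N) ℝ)ˣ where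
  val := diagonal fun i => Q N ℓ t i α x
  inv := diagonal fun i => (Q N ℓ t i α x)⁻¹
  val_inv := by simp [diagonal_mul_diagonal, (Q_pos _ α x).ne']
  inv_val := by simp [diagonal_mul_diagonal, (Q_pos _ α x).ne']

lemma Ltil_eq_Qdiag_conj (α : ℤ) (x : M N) :
    Ltil N ℓ t α x =
      (↑(Qdiag N ℓ t α x)⁻¹ : Matrix (Fin N) (Fin N) ℝ) * Lmat N ℓ t α x *
        Qdiag N ℓ t (α + 1) x := by
  ext i j
  simp only [Ltil, Qdiag, Units.inv_mk, of_apply, diagonal_mul, mul_diagonal]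
  field_simp

lemma prodLtil_eq_Qdiag_conj (α : ℤ) (n : ℕ) (x : M N) :
    prodLtil N ℓ t α n x =
      (↑(Qdiag N ℓ t α x)⁻¹ : Matrix (Fin N) (Fin N) ℝ) * prodL N ℓ t α n x *
        Qdiag N ℓ t (α + n) x := by
  have hconj := List.prod_range_map_units_conj (fun k => Lmat N ℓ t (α + k) x)
    (fun k => Qdiag N ℓ t (α + k) x) n
  simp only [Nat.cast_add, Nat.cast_one, Nat.cast_zero, add_zero, ← add_assoc,
    ← Ltil_eq_Qdiag_conj] at hconj
  rwa [prodL, prodLtil, List.map_range_natCast, List.map_range_natCast]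

lemma prodLtil_apply (α : ℤ) (n : ℕ) (x : M N) (i j : Fin N) :
    prodLtil N ℓ t α n x i j = prodL N ℓ t α n x i j * Q N ℓ t j (α + n) x / Q N ℓ t i α x := by
  rw [prodLtil_eq_Qdiag_conj]
  simp only [Qdiag, Units.inv_mk, diagonal_mul, mul_diagonal]
  field_simp

lemma Lmat_sub_Ltil {x : M N} (hx : x ∈ U N ℓ t) {α : ℤ} (h0 : 0 ≤ α) (h1 : α + 1 ≤ ℓ) :
    Lmat N ℓ t α x - Ltil N ℓ t α x = vecMulVec 1 fun n => u N ℓ t 1 n (α + 1) x := by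
  ext m n
  have hden : 1 - Q N ℓ t n (α + 1) x / Q N ℓ t m α x ≠ 0 :=
    one_sub_Q_div_Q_ne_zero hx ⟨h0, by omega⟩ ⟨by omega, h1⟩ (by simp)
  simp only [Matrix.sub_apply, Lmat, Ltil, of_apply, vecMulVec_apply, Pi.one_apply, one_mul]
  rw [mul_div_assoc, ← mul_one_sub, div_mul_cancel₀ _ hden]

lemma aspin_mul_cspin {x : M N} (hx : x ∈ U N ℓ t) {k : ℕ} (hk : k < ℓ) (i j : Fin N) :
    aspin N ℓ t (k + 1) x i * cspin N ℓ t (k + 1) x j =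
      (prodL N ℓ t 0 k x * (Lmat N ℓ t k x - Ltil N ℓ t k x) *
        prodLtil N ℓ t (k + 1) (ℓ - (k + 1)) x) i j := by
  rw [Lmat_sub_Ltil hx (by positivity) (by omega), mul_vecMulVec, vecMulVec_mul,
    vecMulVec_apply, aspin, cspin, show ((k : ℤ) + 1 - 1).toNat = k by omega,
    show ((ℓ : ℤ) - (k + 1)).toNat = ℓ - (k + 1) by omega]
  simp [mulVec, vecMul, dotProduct]

lemma sum_aspin_mul_cspin {x : M N} (hx : x ∈ U N ℓ t) (i j : Fin N) :
    ∑ ρ ∈ Finset.Icc (1 : ℤ) ℓ, aspin N ℓ t ρ x i * cspin N ℓ t ρ x j =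
      (Ltot N ℓ t x - prodLtil N ℓ t 0 ℓ x) i j := by
  rw [Int.Icc_eq_finset_map, Finset.sum_map, Ltot, prodL, prodLtil, List.map_range_natCast,
    List.map_range_natCast, List.prod_range_map_sub_prod_range_map, Matrix.sum_apply]
  simp only [add_sub_cancel_right, Int.toNat_natCast]
  refine Finset.sum_congr rfl fun k hk => ?_
  rw [Finset.mem_range] at hk
  simp only [Function.Embedding.trans_apply, Nat.castEmbedding_apply, addLeftEmbedding_apply,
    add_comm (1 : ℤ), aspin_mul_cspin hx hk, prodL, prodLtil, List.map_range_natCast, zero_add,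
    Nat.cast_add, Nat.cast_one]

theorem total_L_spin_formula_Ktheoretic_general
    (N ℓ : ℕ) (hℓ : 3 ≤ ℓ) (t : ℝ)
    (i j : Fin N) (x : M N) (hx : x ∈ U N ℓ t) :
    Ltot N ℓ t x i j =
      (∑ ρ ∈ Finset.Icc (1 : ℤ) (ℓ : ℤ), aspin N ℓ t ρ x i * cspin N ℓ t ρ x j) /
        (1 - Q N ℓ t j ℓ x / Q N ℓ t i 0 x) ∧
    (∑ ρ ∈ Finset.Icc (1 : ℤ) (ℓ : ℤ), aspin N ℓ t ρ x i * cspin N ℓ t ρ x j) =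
      Ltot N ℓ t x i j * (1 - Q N ℓ t j ℓ x / Q N ℓ t i 0 x) := by
  have hden : 1 - Q N ℓ t j ℓ x / Q N ℓ t i 0 x ≠ 0 :=
    one_sub_Q_div_Q_ne_zero hx ⟨le_rfl, by positivity⟩ ⟨by positivity, le_rfl⟩ (by simp only [ne_eq, Prod.mk.injEq]; omega)
  have hsum : ∑ ρ ∈ Finset.Icc (1 : ℤ) ℓ, aspin N ℓ t ρ x i * cspin N ℓ t ρ x j =
      Ltot N ℓ t x i j * (1 - Q N ℓ t j ℓ x / Q N ℓ t i 0 x) := by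
    rw [sum_aspin_mul_cspin hx, Matrix.sub_apply, prodLtil_apply, ← Ltot, zero_add]
    ring
  exact ⟨by rw [hsum, mul_div_cancel_right₀ _ hden], hsum⟩

/-- the total K-theoretic L-operator in terms of the spin variables. -/
theorem total_L_spin_formula_Ktheoretic
    (N ℓ : ℕ) (hN : 1 ≤ N) (hℓ : 3 ≤ ℓ) (t : ℝ) (ht : 0 < t) (ht' : t ≠ 1)
    (i j : Fin N) (x : M N) (hx : x ∈ U N ℓ t) :
    Ltot N ℓ t x i j =
      (∑ ρ ∈ Finset.Icc (1 : ℤ) (ℓ : ℤ), aspin N ℓ t ρ x i * cspin N ℓ t ρ x j) /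
        (1 - Q N ℓ t j ℓ x / Q N ℓ t i 0 x) ∧
    (∑ ρ ∈ Finset.Icc (1 : ℤ) (ℓ : ℤ), aspin N ℓ t ρ x i * cspin N ℓ t ρ x j) =
      Ltot N ℓ t x i j * (1 - Q N ℓ t j ℓ x / Q N ℓ t i 0 x) :=
  total_L_spin_formula_Ktheoretic_general N ℓ hℓ t i j x hx

end SpinRSK
end
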